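/- arXiv:2301.09532 — 2 statements merged into one kernel-verified Lean document; each statement's English description precedes it below -/
import Mathlib

section
/- There is no injective group homomorphism from the symmetric group Σ₃ on three letters into the special unitary group SU(2) of 2×2 complex matrices. -/
/-! If `A ∈ SL₂` is an involution then `adjugate A = A⁻¹ = A`; for a `2 × 2` matrix this forces
`A` to be scalar once `2 ≠ 0`, so `A = ±1`. Hence `SU(2)` has exactly one involution, `-1`,
whereas `Σ₃` has three, the transpositions. -/

namespace Matrix

theorem adjugate_eq_self_of_mul_self_eq_one {n R : Type*} [Fintype n] [DecidableEq n] [CommRing R]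
    {A : Matrix n n R} (hA : A * A = 1) (hdet : A.det = 1) : adjugate A = A :=
  calc adjugate A = adjugate A * A * A := by rw [Matrix.mul_assoc, hA, Matrix.mul_one]
    _ = A := by rw [adjugate_mul, hdet, one_smul, Matrix.one_mul]

variable {R : Type*} [CommRing R] [NoZeroDivisors R] [NeZero (2 : R)]

theorem eq_smul_one_of_adjugate_eq_self {A : Matrix (Fin 2) (Fin 2) R} (hA : adjugate A = A) :
    A = A 0 0 • (1 : Matrix (Fin 2) (Fin 2) R) := by
  have eq_zero_of_neg_eq (a : R) (h : -a = a) : a = 0 :=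
    (mul_eq_zero.mp (by rw [two_mul]; exact neg_eq_iff_add_eq_zero.mp h)).resolve_left two_ne_zero
  have h01 : A 0 1 = 0 := eq_zero_of_neg_eq _ (by simpa [adjugate_fin_two] using congrFun₂ hA 0 1)
  have h10 : A 1 0 = 0 := eq_zero_of_neg_eq _ (by simpa [adjugate_fin_two] using congrFun₂ hA 1 0)
  have h11 : A 1 1 = A 0 0 := by simpa [adjugate_fin_two] using congrFun₂ hA 0 0
  rw [eta_fin_two A, h01, h10, h11]
  ext i j
  fin_cases i <;> fin_cases j <;> simp

theorem eq_one_or_eq_neg_one_of_mul_self_eq_one {A : Matrix (Fin 2) (Fin 2) R} (hA : A * A = 1)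
    (hdet : A.det = 1) : A = 1 ∨ A = -1 := by
  have hscalar := eq_smul_one_of_adjugate_eq_self (adjugate_eq_self_of_mul_self_eq_one hA hdet)
  have ha : A 0 0 * A 0 0 = 1 := by
    rw [hscalar, det_smul, det_one] at hdet
    simpa [sq] using hdet
  rcases mul_self_eq_one_iff.mp ha with h | h <;> rw [hscalar, h] <;> simp

end Matrix

theorem Matrix.specialUnitaryGroup.coe_eq_neg_one_of_mul_self_eq_one {R : Type*} [CommRing R]
    [StarRing R] [NoZeroDivisors R] [NeZero (2 : R)] {g : Matrix.specialUnitaryGroup (Fin 2) R}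
    (hg : g * g = 1) (hne : g ≠ 1) : (g : Matrix (Fin 2) (Fin 2) R) = -1 :=
  (Matrix.eq_one_or_eq_neg_one_of_mul_self_eq_one (congrArg Subtype.val hg)
    (Matrix.mem_specialUnitaryGroup_iff.mp g.2).2).resolve_left fun h => hne (Subtype.ext h)

/-- **Σ₃ does not embed into SU(2).**
There is no injective group homomorphism from the symmetric group on three letters
into the special unitary group of 2×2 complex matrices. -/
theorem no_injective_hom_symmGroup3_to_SU2 :
    ¬ ∃ f : Equiv.Perm (Fin 3) →* Matrix.specialUnitaryGroup (Fin 2) ℂ,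
        Function.Injective f := by
  rintro ⟨f, hf⟩
  have image_of_involution (σ : Equiv.Perm (Fin 3)) (hσ : σ * σ = 1) (hne : σ ≠ 1) :
      (f σ : Matrix (Fin 2) (Fin 2) ℂ) = -1 :=
    Matrix.specialUnitaryGroup.coe_eq_neg_one_of_mul_self_eq_one
      (by rw [← map_mul, hσ, map_one]) ((map_ne_one_iff f hf).mpr hne)
  have hswap : Equiv.swap (0 : Fin 3) 1 ≠ Equiv.swap 0 2 := by decide
  exact hswap <| hf <| Subtype.ext <|
    (image_of_involution _ (by decide) (by decide)).trans
      (image_of_involution _ (by decide) (by decide)).symm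
end

section
/- There exists an injective group homomorphism from the dicyclic group Dic₃ of order 12 into the special unitary group SU(2) of 2×2 complex matrices. -/
/-!
Write elements of `SU(2)` by their Cayley–Klein parameters, `(α, β) ↦ !![α, -β̄; β, ᾱ]`, whose
product is quaternion multiplication. With `ζ = exp (π i / n)`, a primitive `2n`-th root of unity,
send `aⁱ` to the parameters `(ζⁱ, 0)` and `x aⁱ` to `(0, ζⁱ)`: the defining relations of the
dicyclic group hold because `ζⁿ = -1`, and the map is injective because `i ↦ ζⁱ` is.
-/

open Matrix

section CayleyKlein

variable {R : Type*} [CommRing R] [StarRing R]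

def cayleyKlein (α β : R) : Matrix (Fin 2) (Fin 2) R :=
  !![α, -star β; β, star α]

theorem cayleyKlein_mul (α β γ δ : R) :
    cayleyKlein α β * cayleyKlein γ δ =
      cayleyKlein (α * γ - star β * δ) (β * γ + star α * δ) := by
  ext i j
  fin_cases i <;> fin_cases j <;> simp [cayleyKlein, star_sub, star_add, star_mul'] <;> ring

theorem cayleyKlein_inj {α β γ δ : R} :
    cayleyKlein α β = cayleyKlein γ δ ↔ α = γ ∧ β = δ := by
  refine ⟨fun h => ⟨?_, ?_⟩, fun ⟨hα, hβ⟩ => hα ▸ hβ ▸ rfl⟩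
  · simpa [cayleyKlein] using congrFun (congrFun h 0) 0
  · simpa [cayleyKlein] using congrFun (congrFun h 1) 0

theorem cayleyKlein_mem_specialUnitaryGroup {α β : R} (h : star α * α + star β * β = 1) :
    cayleyKlein α β ∈ specialUnitaryGroup (Fin 2) R := by
  refine mem_specialUnitaryGroup_iff.mpr ⟨mem_unitaryGroup_iff'.mpr ?_, ?_⟩
  · ext i j
    fin_cases i <;> fin_cases j <;> simp [cayleyKlein, Matrix.mul_apply, Fin.sum_univ_two]
    · exact h
    · ring
    · ring
    · linear_combination h
  · rw [cayleyKlein, det_fin_two_of]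
    linear_combination h

end CayleyKlein

namespace ZMod

variable {N : ℕ} [NeZero N]

theorem star_coe_toCircle (i : ZMod N) : star (toCircle i : ℂ) = toCircle (-i) := by
  rw [AddChar.map_neg_eq_inv, Circle.coe_inv_eq_conj]
  rfl

theorem star_coe_toCircle_mul_self (i : ZMod N) : star (toCircle i : ℂ) * toCircle i = 1 := by
  rw [star_coe_toCircle, ← Circle.coe_mul, ← AddChar.map_add_eq_mul, neg_add_cancel,
    AddChar.map_zero_eq_one, Circle.coe_one]

theorem coe_toCircle_natCast_eq_neg_one (n : ℕ) [NeZero n] :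
    (toCircle (n : ZMod (2 * n)) : ℂ) = -1 := by
  have hn : (n : ℂ) ≠ 0 := Nat.cast_ne_zero.mpr (NeZero.ne n)
  rw [toCircle_natCast]
  push_cast
  rw [show 2 * Real.pi * Complex.I * n / (2 * n) = Real.pi * Complex.I by field_simp,
    Complex.exp_pi_mul_I]

end ZMod

namespace QuaternionGroup

variable {n : ℕ} [NeZero n]

noncomputable def toSpecialUnitaryGroupFun : QuaternionGroup n → specialUnitaryGroup (Fin 2) ℂ
  | a i => ⟨cayleyKlein (ZMod.toCircle i) 0,
      cayleyKlein_mem_specialUnitaryGroup (by simpa using ZMod.star_coe_toCircle_mul_self i)⟩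
  | xa i => ⟨cayleyKlein 0 (ZMod.toCircle i),
      cayleyKlein_mem_specialUnitaryGroup (by simpa using ZMod.star_coe_toCircle_mul_self i)⟩

theorem toSpecialUnitaryGroupFun_mul (g h : QuaternionGroup n) :
    toSpecialUnitaryGroupFun (g * h) =
      toSpecialUnitaryGroupFun g * toSpecialUnitaryGroupFun h := by
  apply Subtype.ext
  rcases g with i | i <;> rcases h with j | j <;>
    simp only [a_mul_a, a_mul_xa, xa_mul_a, xa_mul_xa, toSpecialUnitaryGroupFun,
      Submonoid.coe_mul, cayleyKlein_mul] <;> congr 1 <;>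
    simp only [ZMod.star_coe_toCircle, star_zero, sub_eq_add_neg, AddChar.map_add_eq_mul,
      ZMod.coe_toCircle_natCast_eq_neg_one, Circle.coe_mul] <;> ring

variable (n) in
noncomputable def toSpecialUnitaryGroup : QuaternionGroup n →* specialUnitaryGroup (Fin 2) ℂ :=
  MonoidHom.mk' toSpecialUnitaryGroupFun toSpecialUnitaryGroupFun_mul

theorem toSpecialUnitaryGroup_injective : Function.Injective (toSpecialUnitaryGroup n) := by
  rintro (i | i) (j | j) h <;>
    obtain ⟨hα, hβ⟩ := cayleyKlein_inj.mp (congrArg Subtype.val h)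
  · exact congrArg a (ZMod.injective_stdAddChar hα)
  · exact absurd hα (Circle.coe_ne_zero _)
  · exact absurd hα.symm (Circle.coe_ne_zero _)
  · exact congrArg xa (ZMod.injective_stdAddChar hβ)

end QuaternionGroup

/-- **Dic₃ embeds into SU(2).**
There exists an injective group homomorphism from the dicyclic group of order 12
(`QuaternionGroup 3` in Mathlib) into the special unitary group of 2×2 complex
matrices. -/
theorem exists_injective_hom_dicyclic3_to_SU2 :
    ∃ f : QuaternionGroup 3 →* Matrix.specialUnitaryGroup (Fin 2) ℂ,
      Function.Injective f :=
  ⟨QuaternionGroup.toSpecialUnitaryGroup 3, QuaternionGroup.toSpecialUnitaryGroup_injective⟩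
end
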